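/- Let f : 𝒳 → ℝ be k-Lipschitz on 𝒳 ⊆ ℝ^d, let X₁,…,X_t ∈ 𝒳, and let g : 𝒳 → ℝ be k-Lipschitz with g(X_i) = f(X_i) for all i ≤ t. If x₀ ∈ 𝒳 is a global maximizer of g, then min_{i≤t} (f(X_i) + k‖x₀ − X_i‖₂) ≥ max_{j≤t} f(X_j). -/
import Mathlib


/-- Any maximizer of a k-Lipschitz function g consistent with the observed
evaluations of f satisfies the Lipschitz acceptance condition with rate k. -/
theorem stmt_9 {d t : ℕ} (𝒳 : Set (EuclideanSpace ℝ (Fin d)))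
    (f g : EuclideanSpace ℝ (Fin d) → ℝ) (k : ℝ) (hk : 0 ≤ k)
    (hf : ∀ x ∈ 𝒳, ∀ y ∈ 𝒳, |f x - f y| ≤ k * ‖x - y‖)
    (hg : ∀ x ∈ 𝒳, ∀ y ∈ 𝒳, |g x - g y| ≤ k * ‖x - y‖)
    (X : Fin (t+1) → EuclideanSpace ℝ (Fin d)) (hX : ∀ i, X i ∈ 𝒳)
    (hcons : ∀ i, g (X i) = f (X i))
    (x₀ : EuclideanSpace ℝ (Fin d)) (hx₀ : x₀ ∈ 𝒳)
    (hmax : ∀ x ∈ 𝒳, g x ≤ g x₀) :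
    Finset.univ.inf' Finset.univ_nonempty
        (fun i => f (X i) + k * ‖x₀ - X i‖) ≥
      Finset.univ.sup' Finset.univ_nonempty (fun j => f (X j)) := by
  rw [ge_iff_le, Finset.sup'_le_iff]
  intro j _
  rw [Finset.le_inf'_iff]
  intro i _
  have h1 : f (X j) = g (X j) := (hcons j).symm
  have h2 : g (X j) ≤ g x₀ := hmax _ (hX j)
  have h3 : g x₀ - g (X i) ≤ k * ‖x₀ - X i‖ :=
    le_trans (le_abs_self _) (hg _ hx₀ _ (hX i))
  have := hcons i
  linarith
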